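/- Fix N ∈ ℕ, N ≥ 2, and assume f : [0,1] × ℝ → ℝ satisfies: C(c): f is continuous on [0,1] × ℝ with continuous partial derivative f_x with respect to the second variable; D(f): there exist positive constants A, B with A < 1 such that |f(t,x)| ≤ A|x| + B for all t ∈ [0,1], x ∈ ℝ; D(f_x): inf over [0,1] × ℝ of f_x is > −1. Then the operator D_N : 𝔼_N → 𝔼_N, (D_N x)(k) := Δ²x(k−1) − (1/N²) f(k/N, x(k)) for k = 1,…,N−1 and 0 for k = 0, N, is a diffeomorphism. -/

import Mathlib

/-- The space `𝔼_N` of functions `x : {0,…,N} → ℝ` with `x(0) = x(N) = 0` is identified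
with `ℝ^{N−1}` via the interior values `x(1),…,x(N−1)`; `ext N x k` recovers `x(k)` for
`k ∈ ℤ` (extending by `0` at the boundary and outside `{0,…,N}`).  With this
identification the Euclidean norm of `ℝ^{N−1}` is exactly `‖x‖_N`. -/
noncomputable def ext (N : ℕ) (x : EuclideanSpace ℝ (Fin (N-1))) (k : ℤ) : ℝ :=
  if h : 1 ≤ k ∧ k ≤ (N:ℤ) - 1 then x ⟨(k-1).toNat, by omega⟩ else 0

/-- The operator `D_N : 𝔼_N → 𝔼_N`,
`(D_N x)(k) = Δ²x(k−1) − (1/N²) f(k/N, x(k))` for `k = 1,…,N−1`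
(and `0` at `k = 0, N`), written on interior indices `k = i + 1`, `i : Fin (N−1)`. -/
noncomputable def DN (N : ℕ) (f : ℝ → ℝ → ℝ) (x : EuclideanSpace ℝ (Fin (N-1))) :
    EuclideanSpace ℝ (Fin (N-1)) :=
  WithLp.toLp 2 (fun i => ext N x ((i:ℕ)+2) - 2 * ext N x ((i:ℕ)+1) + ext N x (i:ℕ)
    - (1/(N:ℝ)^2) * f ((((i:ℕ):ℝ)+1)/(N:ℝ)) (ext N x ((i:ℕ)+1)))

/-!
Write `D_N = Δ² - N⁻² Φ` with `Φ x = (f(k/N, x(k)))_k`. Summation by parts gives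
`⟪Δ²v, v⟫ = -∑ (Δv)²`, which a discrete Poincaré inequality bounds by `-‖v‖²/N²`; the mean
value theorem and `f_x ≥ m` make `Φ` strongly monotone with constant `m`. Hence `-D_N` is
strongly monotone with constant `(1 + m)/N² > 0`. A `C¹` strongly monotone map of a
finite-dimensional inner product space is injective and proper, and its derivative is everywhere
invertible, so its range is open and closed, hence everything; the inverse is `C¹` by the
inverse function theorem.
-/

open RealInnerProductSpace

section StronglyMonotone

variable {E : Type*} [NormedAddCommGroup E] [InnerProductSpace ℝ E]

def StronglyMonotoneWith (c : ℝ) (F : E → E) : Prop :=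
  ∀ x y, c * ‖x - y‖ ^ 2 ≤ ⟪F x - F y, x - y⟫

namespace StronglyMonotoneWith

variable {c : ℝ} {F : E → E}

theorem mul_norm_sub_le (hF : StronglyMonotoneWith c F) (x y : E) :
    c * ‖x - y‖ ≤ ‖F x - F y‖ := by
  rcases eq_or_ne x y with rfl | hne
  · simp
  have hpos : 0 < ‖x - y‖ := norm_pos_iff.2 (sub_ne_zero.2 hne)
  have := (hF x y).trans (real_inner_le_norm _ _)
  nlinarith

theorem antilipschitzWith (hF : StronglyMonotoneWith c F) (hc : 0 < c) :
    AntilipschitzWith (Real.toNNReal c⁻¹) F :=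
  AntilipschitzWith.of_le_mul_dist fun x y => by
    rw [Real.coe_toNNReal _ (inv_nonneg.2 hc.le), dist_eq_norm, dist_eq_norm,
      le_inv_mul_iff₀ hc]
    exact hF.mul_norm_sub_le x y

/-- Along the line `t ↦ x + t • v`, the map `t ↦ ⟪v, F (x + t • v)⟫ - t c ‖v‖²` is monotone,
so its derivative at `0` is nonnegative. -/
theorem mul_norm_sq_le_inner_fderiv (hF : StronglyMonotoneWith c F) {F' : E →L[ℝ] E} {x : E}
    (hF' : HasFDerivAt F F' x) (v : E) : c * ‖v‖ ^ 2 ≤ ⟪F' v, v⟫ := by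
  set φ : ℝ → ℝ := fun t => ⟪v, F (x + t • v)⟫ - t * (c * ‖v‖ ^ 2)
  have hline : HasDerivAt (fun t : ℝ => x + t • v) v 0 := by
    simpa using ((hasDerivAt_id (0 : ℝ)).smul_const v).const_add x
  have hφ : HasDerivAt φ (⟪v, F' v⟫ - c * ‖v‖ ^ 2) 0 := by
    have hFline := (by simpa using hF' : HasFDerivAt F F' (x + (0:ℝ) • v)).comp_hasDerivAt 0 hline
    exact ((innerSL ℝ v).hasFDerivAt.comp_hasDerivAt 0 hFline).sub
      (hasDerivAt_mul_const _)
  have hmono : Monotone φ := by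
    intro s t hst
    rcases hst.eq_or_lt with rfl | hlt
    · rfl
    have key := hF (x + t • v) (x + s • v)
    rw [show x + t • v - (x + s • v) = (t - s) • v by rw [sub_smul]; abel, norm_smul,
      real_inner_smul_right, Real.norm_eq_abs, abs_of_pos (sub_pos.2 hlt), real_inner_comm,
      inner_sub_right] at key
    simp only [φ]
    nlinarith [sub_pos.2 hlt]
  linarith [hφ.nonneg_of_monotone hmono, real_inner_comm v (F' v)]

theorem add {d : ℝ} {G : E → E} (hF : StronglyMonotoneWith c F)
    (hG : StronglyMonotoneWith d G) : StronglyMonotoneWith (c + d) (F + G) := fun x y => by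
  have := add_le_add (hF x y) (hG x y)
  simp only [Pi.add_apply, add_sub_add_comm, inner_add_left]
  linarith

theorem const_smul {a : ℝ} (hF : StronglyMonotoneWith c F) (ha : 0 ≤ a) :
    StronglyMonotoneWith (a * c) (a • F) := fun x y => by
  simp only [Pi.smul_apply, ← smul_sub, real_inner_smul_left, mul_assoc]
  exact mul_le_mul_of_nonneg_left (hF x y) ha

theorem exists_hasStrictFDerivAt_equiv [FiniteDimensional ℝ E] (hF : StronglyMonotoneWith c F)
    (hc : 0 < c) (hdiff : ContDiff ℝ 1 F) (x : E) :
    ∃ F' : E ≃L[ℝ] E, HasStrictFDerivAt F (F' : E →L[ℝ] E) x := by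
  have hstrict := hdiff.contDiffAt.hasStrictFDerivAt (x := x) one_ne_zero
  have hinj : Function.Injective (fderiv ℝ F x) := by
    refine (injective_iff_map_eq_zero _).2 fun v hv => ?_
    have := hF.mul_norm_sq_le_inner_fderiv hstrict.hasFDerivAt v
    rw [hv, inner_zero_left] at this
    simpa using nonpos_of_mul_nonpos_right this hc
  exact ⟨(LinearEquiv.ofInjectiveEndo _ hinj).toContinuousLinearEquiv, hstrict⟩

/-- The range is open by the inverse function theorem and closed because `F` is proper. -/
theorem surjective [FiniteDimensional ℝ E] (hF : StronglyMonotoneWith c F) (hc : 0 < c)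
    (hcont : Continuous F) (hopen : IsOpenMap F) : Function.Surjective F := by
  have hproper : IsProperMap F := isProperMap_iff_tendsto_cocompact.2
    ⟨hcont, by simpa [← Metric.cobounded_eq_cocompact] using
      (hF.antilipschitzWith hc).tendsto_cobounded⟩
  rw [← Set.range_eq_univ]
  exact IsClopen.eq_univ ⟨hproper.isClosed_range, hopen.isOpen_range⟩ (Set.range_nonempty F)

theorem exists_contDiff_inverse [FiniteDimensional ℝ E] (hF : StronglyMonotoneWith c F)
    (hc : 0 < c) (hdiff : ContDiff ℝ 1 F) :
    ∃ G : E → E, Function.LeftInverse G F ∧ Function.RightInverse G F ∧ ContDiff ℝ 1 G := by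
  choose F' hF' using hF.exists_hasStrictFDerivAt_equiv hc hdiff
  have hopen : IsOpenMap F := isOpenMap_of_hasStrictFDerivAt_equiv hF'
  have hbij : Function.Bijective F :=
    ⟨(hF.antilipschitzWith hc).injective, hF.surjective hc hdiff.continuous hopen⟩
  let e : E ≃ₜ E := (Equiv.ofBijective F hbij).toHomeomorphOfContinuousOpen hdiff.continuous hopen
  exact ⟨e.symm, e.symm_apply_apply, e.apply_symm_apply,
    e.contDiff_symm (fun x => (hF' x).hasFDerivAt) hdiff⟩

end StronglyMonotoneWith

end StronglyMonotone

section SummationByParts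

open Finset

theorem sum_range_secondDiff_mul (w : ℕ → ℝ) (h0 : w 0 = 0) (M : ℕ) :
    ∑ i ∈ range M, (w (i + 2) - 2 * w (i + 1) + w i) * w (i + 1)
      = (w (M + 1) - w M) * w M - ∑ k ∈ range M, (w (k + 1) - w k) ^ 2 := by
  induction M with
  | zero => simp [h0]
  | succ M ih => rw [sum_range_succ, sum_range_succ, ih]; ring

theorem sq_le_mul_sum_sq_sub (w : ℕ → ℝ) (h0 : w 0 = 0) (n : ℕ) :
    w n ^ 2 ≤ n * ∑ k ∈ range n, (w (k + 1) - w k) ^ 2 := by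
  have htel : w n = ∑ k ∈ range n, (w (k + 1) - w k) := by rw [sum_range_sub w, h0, sub_zero]
  simpa [htel] using sq_sum_le_card_mul_sum_sq (s := range n) (f := fun k => w (k + 1) - w k)

theorem sum_sq_le_sq_mul_sum_sq_sub (w : ℕ → ℝ) (h0 : w 0 = 0) (M : ℕ) :
    ∑ i ∈ range M, w (i + 1) ^ 2 ≤ (M + 1) ^ 2 * ∑ k ∈ range (M + 1), (w (k + 1) - w k) ^ 2 := by
  set S := ∑ k ∈ range (M + 1), (w (k + 1) - w k) ^ 2
  have hterm : ∀ i ∈ range M, w (i + 1) ^ 2 ≤ (M + 1) * S := by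
    intro i hi
    have hiM : i + 1 ≤ M + 1 := by simp at hi; omega
    calc w (i + 1) ^ 2 ≤ (i + 1 : ℕ) * ∑ k ∈ range (i + 1), (w (k + 1) - w k) ^ 2 :=
          sq_le_mul_sum_sq_sub w h0 (i + 1)
      _ ≤ (M + 1) * S := by
          gcongr
          · exact_mod_cast hiM
          · exact sum_le_sum_of_subset_of_nonneg (range_subset_range.2 hiM)
              fun _ _ _ => sq_nonneg _
  have hS : 0 ≤ S := sum_nonneg fun _ _ => sq_nonneg _
  calc ∑ i ∈ range M, w (i + 1) ^ 2 ≤ M * ((M + 1) * S) := by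
        simpa using sum_le_sum hterm
    _ ≤ (M + 1) ^ 2 * S := by nlinarith

theorem sum_range_secondDiff_mul_le (w : ℕ → ℝ) (h0 : w 0 = 0) (M : ℕ) (hM : w (M + 1) = 0) :
    ∑ i ∈ range M, (w (i + 2) - 2 * w (i + 1) + w i) * w (i + 1)
      ≤ -(1 / (M + 1) ^ 2) * ∑ i ∈ range M, w (i + 1) ^ 2 := by
  have hP := sum_sq_le_sq_mul_sum_sq_sub w h0 M
  rw [sum_range_succ, hM] at hP
  rw [sum_range_secondDiff_mul w h0, hM, neg_mul, one_div_mul_eq_div, le_neg,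
    div_le_iff₀ (by positivity)]
  linarith

end SummationByParts

theorem mul_sq_le_sub_mul_sub_of_le_deriv {g g' : ℝ → ℝ} {m : ℝ}
    (hg : ∀ z, HasDerivAt g (g' z) z) (hm : ∀ z, m ≤ g' z) (a b : ℝ) :
    m * (a - b) ^ 2 ≤ (g a - g b) * (a - b) := by
  have hmono : Monotone fun z => g z - m * z :=
    monotone_of_hasDerivAt_nonneg (fun z => (hg z).sub ((hasDerivAt_id z).const_mul m))
      fun z => by simpa using hm z
  have key : 0 ≤ (g a - m * a - (g b - m * b)) * (a - b) := by
    rcases le_total b a with hba | hab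
    · exact mul_nonneg (sub_nonneg.2 (hmono hba)) (sub_nonneg.2 hba)
    · exact mul_nonneg_of_nonpos_of_nonpos (sub_nonpos.2 (hmono hab)) (sub_nonpos.2 hab)
  nlinarith

theorem ContinuousOn.continuous_slice {g : ℝ → ℝ → ℝ} {s : Set ℝ}
    (hg : ContinuousOn (fun p : ℝ × ℝ => g p.1 p.2) (s ×ˢ Set.univ)) {t : ℝ} (ht : t ∈ s) :
    Continuous (g t) :=
  continuousOn_univ.1 <| hg.comp (Continuous.prodMk_right t).continuousOn
    fun _ _ => ⟨ht, trivial⟩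

theorem contDiff_one_of_hasDerivAt {g g' : ℝ → ℝ} (hg : ∀ z, HasDerivAt g (g' z) z)
    (hg' : Continuous g') : ContDiff ℝ 1 g := by
  rw [contDiff_one_iff_deriv]
  exact ⟨fun z => (hg z).differentiableAt, by rwa [funext fun z => (hg z).deriv]⟩

section DiscreteOperator

local notation "𝔼" N:max => EuclideanSpace ℝ (Fin (N - 1))

variable {N : ℕ}

theorem ext_sub (x y : 𝔼 N) (k : ℤ) : ext N (x - y) k = ext N x k - ext N y k := by
  unfold ext
  split_ifs <;> simp

theorem ext_natCast_add_one (x : 𝔼 N) (i : Fin (N - 1)) : ext N x ((i : ℕ) + 1) = x i := by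
  have hi := i.isLt
  rw [ext, dif_pos (by omega)]
  exact congrArg x.ofLp (Fin.ext (by simp))

theorem ext_zero (x : 𝔼 N) : ext N x 0 = 0 := dif_neg (by omega)

theorem ext_natCast_self (x : 𝔼 N) : ext N x N = 0 := dif_neg (by omega)

theorem contDiff_ext {n : WithTop ℕ∞} (k : ℤ) : ContDiff ℝ n fun x : 𝔼 N => ext N x k := by
  unfold ext
  split_ifs
  · exact (EuclideanSpace.proj _ : 𝔼 N →L[ℝ] ℝ).contDiff
  · exact contDiff_const

theorem natCast_add_one_div_mem_Icc (i : Fin (N - 1)) : ((i : ℕ) + 1 : ℝ) / N ∈ Set.Icc 0 1 := by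
  have hi : (i : ℕ) + 1 ≤ N := by omega
  have hN : (0 : ℝ) < N := by exact_mod_cast (show 0 < N by omega)
  exact ⟨by positivity, (div_le_one hN).2 (by exact_mod_cast hi)⟩

noncomputable def secondDiff (N : ℕ) (x : 𝔼 N) : 𝔼 N :=
  WithLp.toLp 2 fun i => ext N x ((i : ℕ) + 2) - 2 * ext N x ((i : ℕ) + 1) + ext N x (i : ℕ)

noncomputable def nemytskii (N : ℕ) (f : ℝ → ℝ → ℝ) (x : 𝔼 N) : 𝔼 N :=
  WithLp.toLp 2 fun i => f (((i : ℕ) + 1) / N) (x i)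

theorem DN_eq_secondDiff_sub_smul_nemytskii (f : ℝ → ℝ → ℝ) :
    DN N f = secondDiff N - (1 / (N : ℝ) ^ 2) • nemytskii N f := by
  ext x i
  simp [DN, secondDiff, nemytskii, ext_natCast_add_one]

theorem secondDiff_sub (x y : 𝔼 N) : secondDiff N (x - y) = secondDiff N x - secondDiff N y := by
  ext i
  simp only [secondDiff, ext_sub, PiLp.sub_apply]
  ring

theorem inner_secondDiff_self_le (hN : 1 ≤ N) (v : 𝔼 N) :
    ⟪secondDiff N v, v⟫ ≤ -(1 / (N : ℝ) ^ 2) * ‖v‖ ^ 2 := by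
  set w : ℕ → ℝ := fun k => ext N v k
  have hinner : ⟪secondDiff N v, v⟫ =
      ∑ i ∈ Finset.range (N - 1), (w (i + 2) - 2 * w (i + 1) + w i) * w (i + 1) := by
    rw [PiLp.inner_apply, ← Fin.sum_univ_eq_sum_range]
    refine Finset.sum_congr rfl fun i _ => ?_
    simp [w, secondDiff, ext_natCast_add_one, mul_comm]
  have hnorm : ‖v‖ ^ 2 = ∑ i ∈ Finset.range (N - 1), w (i + 1) ^ 2 := by
    rw [EuclideanSpace.norm_sq_eq, ← Fin.sum_univ_eq_sum_range]
    simp [w, ext_natCast_add_one]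
  have hcast : ((N - 1 : ℕ) : ℝ) + 1 = N := by rw [Nat.cast_sub hN]; ring
  have hM : w (N - 1 + 1) = 0 := by simp [w, Nat.sub_add_cancel hN, ext_natCast_self]
  simpa [hinner, hnorm, hcast] using sum_range_secondDiff_mul_le w (ext_zero v) (N - 1) hM

theorem stronglyMonotoneWith_neg_secondDiff (hN : 1 ≤ N) :
    StronglyMonotoneWith (1 / (N : ℝ) ^ 2) (-secondDiff N) := fun x y => by
  have hlin : (-secondDiff N) x - (-secondDiff N) y = -secondDiff N (x - y) := by
    rw [Pi.neg_apply, Pi.neg_apply, secondDiff_sub, neg_sub, neg_sub_neg]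
  rw [hlin, inner_neg_left]
  linarith [inner_secondDiff_self_le hN (x - y)]

theorem stronglyMonotoneWith_nemytskii {f fx : ℝ → ℝ → ℝ} {m : ℝ}
    (hfx : ∀ t ∈ Set.Icc (0 : ℝ) 1, ∀ z, HasDerivAt (f t) (fx t z) z)
    (hm : ∀ t ∈ Set.Icc (0 : ℝ) 1, ∀ z, m ≤ fx t z) :
    StronglyMonotoneWith m (nemytskii N f) := fun x y => by
  rw [EuclideanSpace.norm_sq_eq, PiLp.inner_apply, Finset.mul_sum]
  refine Finset.sum_le_sum fun i _ => ?_
  have ht := natCast_add_one_div_mem_Icc i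
  simpa [nemytskii, mul_comm] using
    mul_sq_le_sub_mul_sub_of_le_deriv (hfx _ ht) (hm _ ht) (x i) (y i)

theorem contDiff_secondDiff {n : WithTop ℕ∞} : ContDiff ℝ n (secondDiff N) :=
  contDiff_euclidean.2 fun _ =>
    ((contDiff_ext _).sub (contDiff_const.mul (contDiff_ext _))).add (contDiff_ext _)

theorem contDiff_nemytskii {f fx : ℝ → ℝ → ℝ}
    (hfx : ∀ t ∈ Set.Icc (0 : ℝ) 1, ∀ z, HasDerivAt (f t) (fx t z) z)
    (hfx_cont : ContinuousOn (fun p : ℝ × ℝ => fx p.1 p.2) (Set.Icc 0 1 ×ˢ Set.univ)) :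
    ContDiff ℝ 1 (nemytskii N f) :=
  contDiff_euclidean.2 fun i =>
    (contDiff_one_of_hasDerivAt (hfx _ (natCast_add_one_div_mem_Icc i))
      (hfx_cont.continuous_slice (natCast_add_one_div_mem_Icc i))).comp
      (EuclideanSpace.proj i : 𝔼 N →L[ℝ] ℝ).contDiff

end DiscreteOperator

theorem DN_is_diffeomorphism_general
    (N : ℕ) (hN : 2 ≤ N) (f fx : ℝ → ℝ → ℝ)
    (hfx_deriv : ∀ t ∈ Set.Icc (0:ℝ) 1, ∀ z : ℝ, HasDerivAt (fun w => f t w) (fx t z) z)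
    (hfx_cont : ContinuousOn (fun p : ℝ × ℝ => fx p.1 p.2) (Set.Icc 0 1 ×ˢ Set.univ))
    (hfx_lb : ∃ m : ℝ, -1 < m ∧ ∀ t ∈ Set.Icc (0:ℝ) 1, ∀ z : ℝ, m ≤ fx t z) :
    Function.Bijective (DN N f) ∧ ContDiff ℝ 1 (DN N f) ∧
      ∃ G : EuclideanSpace ℝ (Fin (N-1)) → EuclideanSpace ℝ (Fin (N-1)),
        Function.LeftInverse G (DN N f) ∧ Function.RightInverse G (DN N f) ∧
        ContDiff ℝ 1 G := by
  obtain ⟨m, hm, hfx_ge⟩ := hfx_lb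
  have hDN : ContDiff ℝ 1 (DN N f) := by
    rw [DN_eq_secondDiff_sub_smul_nemytskii]
    exact contDiff_secondDiff.sub (contDiff_const.smul (contDiff_nemytskii hfx_deriv hfx_cont))
  have hmono : StronglyMonotoneWith ((1 + m) / (N : ℝ) ^ 2) (-DN N f) := by
    rw [DN_eq_secondDiff_sub_smul_nemytskii, neg_sub', sub_neg_eq_add,
      show (1 + m) / (N : ℝ) ^ 2 = 1 / (N : ℝ) ^ 2 + 1 / (N : ℝ) ^ 2 * m by ring]
    exact (stronglyMonotoneWith_neg_secondDiff (by omega)).add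
      ((stronglyMonotoneWith_nemytskii hfx_deriv hfx_ge).const_smul (by positivity))
  obtain ⟨G, hGl, hGr, hG⟩ :=
    hmono.exists_contDiff_inverse (div_pos (by linarith) (by positivity)) hDN.neg
  have hl : Function.LeftInverse (G ∘ Neg.neg) (DN N f) := fun x => hGl x
  have hr : Function.RightInverse (G ∘ Neg.neg) (DN N f) := fun y => neg_injective (hGr (-y))
  exact ⟨⟨hl.injective, hr.surjective⟩, hDN, G ∘ Neg.neg, hl, hr, hG.comp contDiff_neg⟩

/-- Under C(c), D(f) (`A < 1`) and D(f_x) (`inf f_x > −1`), the operator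
`D_N : 𝔼_N → 𝔼_N`, `(D_N x)(k) = Δ²x(k−1) − (1/N²) f(k/N, x(k))`, is a diffeomorphism:
bijective, of class `C¹`, and with a `C¹` inverse. -/
theorem DN_is_diffeomorphism
    (N : ℕ) (hN : 2 ≤ N) (f fx : ℝ → ℝ → ℝ)
    (hf_cont : ContinuousOn (fun p : ℝ × ℝ => f p.1 p.2) (Set.Icc 0 1 ×ˢ Set.univ))
    (hfx_deriv : ∀ t ∈ Set.Icc (0:ℝ) 1, ∀ z : ℝ, HasDerivAt (fun w => f t w) (fx t z) z)
    (hfx_cont : ContinuousOn (fun p : ℝ × ℝ => fx p.1 p.2) (Set.Icc 0 1 ×ˢ Set.univ))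
    (A B : ℝ) (hA : 0 < A) (hB : 0 < B) (hAlt : A < 1)
    (hgrowth : ∀ t ∈ Set.Icc (0:ℝ) 1, ∀ z : ℝ, |f t z| ≤ A * |z| + B)
    (hfx_lb : ∃ m : ℝ, -1 < m ∧ ∀ t ∈ Set.Icc (0:ℝ) 1, ∀ z : ℝ, m ≤ fx t z) :
    Function.Bijective (DN N f) ∧ ContDiff ℝ 1 (DN N f) ∧
      ∃ G : EuclideanSpace ℝ (Fin (N-1)) → EuclideanSpace ℝ (Fin (N-1)),
        Function.LeftInverse G (DN N f) ∧ Function.RightInverse G (DN N f) ∧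
        ContDiff ℝ 1 G :=
  DN_is_diffeomorphism_general N hN f fx hfx_deriv hfx_cont hfx_lb
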